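/- arXiv:math/0601186 — 2 statements merged into one kernel-verified Lean document; each statement's English description precedes it below -/
import Mathlib

section
/- Let m \u2265 1, and let p_1,\u2026,p_m, q_1,\u2026,q_m be indeterminates. Set r_i = p_1 + \u22ef + p_i (with r_0 = 0). Then the following identity of rational functions (equivalently, formal power series) in z holds: [(1 - r_m z) \u00b7 \u220f_{i=1}^m (1 - (q_i + r_{i-1}) z)] / [\u220f_{i=1}^m (1 - (q_i + r_i) z)] = \u220f_{i=1}^m [1 + p_i q_i z\u00b2 / ((1 - r_{i-1} z)(1 - (q_i + r_i) z))]. -/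
/-! Writing `r_i = r_{i-1} + p_i`, the identity
`(1 - r_i z)(1 - (q_i + r_{i-1}) z) - (1 - r_{i-1} z)(1 - (q_i + r_i) z) = p_i q_i z²`
turns the `i`-th factor on the right into
`(1 - r_i z)(1 - (q_i + r_{i-1}) z) / ((1 - r_{i-1} z)(1 - (q_i + r_i) z))`.
In the product the factors `(1 - r_i z) / (1 - r_{i-1} z)` telescope to `1 - r_m z`,
since `r_0 = 0`.
All denominators are nonzero because they have constant term `1` as polynomials. -/

/-- The field of rational functions `ℚ(p_1,…,p_m,q_1,…,q_m,z)`. -/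
abbrev RatField (m : ℕ) : Type := FractionRing (MvPolynomial (Fin m ⊕ Fin m ⊕ Unit) ℚ)

noncomputable def pvar {m : ℕ} (i : Fin m) : RatField m :=
  algebraMap (MvPolynomial (Fin m ⊕ Fin m ⊕ Unit) ℚ) _ (MvPolynomial.X (Sum.inl i))

noncomputable def qvar {m : ℕ} (i : Fin m) : RatField m :=
  algebraMap (MvPolynomial (Fin m ⊕ Fin m ⊕ Unit) ℚ) _ (MvPolynomial.X (Sum.inr (Sum.inl i)))

noncomputable def zvar {m : ℕ} : RatField m :=
  algebraMap (MvPolynomial (Fin m ⊕ Fin m ⊕ Unit) ℚ) _ (MvPolynomial.X (Sum.inr (Sum.inr ())))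

/-- `r_i = p_1 + ⋯ + p_i` (with `r_0 = 0`). -/
noncomputable def rsum {m : ℕ} (i : ℕ) : RatField m :=
  ∑ j : Fin m, if (j : ℕ) < i then pvar j else 0

open Finset

theorem one_add_mul_div_eq_div {K : Type*} [Field K] {a p q z : K} (ha : 1 - a * z ≠ 0)
    (hb : 1 - (q + (a + p)) * z ≠ 0) :
    1 + p * q * z ^ 2 / ((1 - a * z) * (1 - (q + (a + p)) * z)) =
      (1 - (a + p) * z) * (1 - (q + a) * z) / ((1 - a * z) * (1 - (q + (a + p)) * z)) := by
  rw [eq_div_iff (mul_ne_zero ha hb), add_mul, div_mul_cancel₀ _ (mul_ne_zero ha hb)]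
  ring

theorem Fin.prod_univ_succ_mul_eq {M : Type*} [CommMonoid M] (n : ℕ) (f : ℕ → M) :
    (∏ i : Fin n, f (i + 1)) * f 0 = (∏ i : Fin n, f i) * f n := by
  rw [Fin.prod_univ_eq_prod_range (fun i => f (i + 1)), Fin.prod_univ_eq_prod_range,
    ← prod_range_succ', prod_range_succ]

theorem prod_one_add_div_eq {K : Type*} [Field K] {m : ℕ} (p q : Fin m → K) (r : ℕ → K)
    (z : K) (hr₀ : r 0 = 0) (hr : ∀ i : Fin m, r (i + 1) = r i + p i)
    (hA : ∀ i : Fin m, 1 - r i * z ≠ 0) (hB : ∀ i : Fin m, 1 - (q i + r (i + 1)) * z ≠ 0) :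
    ((1 - r m * z) * ∏ i : Fin m, (1 - (q i + r i) * z)) /
        ∏ i : Fin m, (1 - (q i + r (i + 1)) * z) =
      ∏ i : Fin m,
        (1 + p i * q i * z ^ 2 / ((1 - r i * z) * (1 - (q i + r (i + 1)) * z))) := by
  have hfactor : ∀ i : Fin m,
      1 + p i * q i * z ^ 2 / ((1 - r i * z) * (1 - (q i + r (i + 1)) * z)) =
        (1 - r (i + 1) * z) * (1 - (q i + r i) * z) /
          ((1 - r i * z) * (1 - (q i + r (i + 1)) * z)) := by
    intro i
    have hBi := hB i
    rw [hr] at hBi ⊢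
    exact one_add_mul_div_eq_div (hA i) hBi
  have htelescope :
      ∏ i : Fin m, (1 - r (i + 1) * z) = (1 - r m * z) * ∏ i : Fin m, (1 - r i * z) := by
    simpa [hr₀, mul_comm] using Fin.prod_univ_succ_mul_eq m (fun k => 1 - r k * z)
  rw [prod_congr rfl fun i _ => hfactor i, prod_div_distrib, prod_mul_distrib, prod_mul_distrib,
    htelescope, mul_assoc, mul_left_comm (1 - r m * z),
    mul_div_mul_left _ _ (prod_ne_zero_iff.mpr fun i _ => hA i)]

theorem MvPolynomial.one_sub_mul_X_ne_zero {σ R : Type*} [CommRing R] [Nontrivial R]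
    (f : MvPolynomial σ R) (s : σ) : 1 - f * X s ≠ 0 := by
  intro h
  simpa using congrArg constantCoeff h

abbrev PolyRing (m : ℕ) : Type := MvPolynomial (Fin m ⊕ Fin m ⊕ Unit) ℚ

theorem one_sub_mul_zvar_ne_zero {m : ℕ} {a : RatField m}
    (ha : a ∈ (algebraMap (PolyRing m) (RatField m)).range) :
    1 - a * zvar ≠ 0 := by
  obtain ⟨f, rfl⟩ := ha
  rw [zvar, ← map_mul, ← map_one (algebraMap (PolyRing m) (RatField m)), ← map_sub]
  exact IsFractionRing.to_map_ne_zero_of_mem_nonZeroDivisors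
    (mem_nonZeroDivisors_of_ne_zero (MvPolynomial.one_sub_mul_X_ne_zero f _))

theorem rsum_mem_range {m : ℕ} (k : ℕ) :
    rsum (m := m) k ∈ (algebraMap (PolyRing m) (RatField m)).range := by
  refine Subring.sum_mem _ fun j _ => ?_
  split_ifs
  · exact ⟨_, rfl⟩
  · exact zero_mem _

theorem rsum_zero {m : ℕ} : rsum (m := m) 0 = 0 := by
  simp [rsum]

theorem rsum_succ {m : ℕ} (i : Fin m) : rsum (m := m) (i + 1) = rsum i + pvar i := by
  unfold rsum
  rw [← Fintype.sum_ite_eq' i pvar, ← sum_add_distrib]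
  refine sum_congr rfl fun j _ => ?_
  rcases lt_trichotomy j i with h | rfl | h
  · simp [h, h.ne, Nat.lt_succ_of_lt (Fin.lt_def.mp h)]
  · simp
  · simp [h.ne', not_lt.mpr h.le, not_le.mpr h]

theorem phi_product_identity_general (m : ℕ) :
    ((1 - rsum (m := m) m * zvar) *
        ∏ i : Fin m, (1 - (qvar i + rsum (i : ℕ)) * zvar)) /
        (∏ i : Fin m, (1 - (qvar i + rsum ((i : ℕ) + 1)) * zvar)) =
      ∏ i : Fin m,
        (1 + pvar i * qvar i * zvar ^ 2 /
          ((1 - rsum (m := m) (i : ℕ) * zvar) *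
            (1 - (qvar i + rsum ((i : ℕ) + 1)) * zvar))) :=
  prod_one_add_div_eq pvar qvar rsum zvar rsum_zero rsum_succ
    (fun _ => one_sub_mul_zvar_ne_zero (rsum_mem_range _))
    (fun _ => one_sub_mul_zvar_ne_zero (add_mem ⟨_, rfl⟩ (rsum_mem_range _)))

/-- The rational function identity
`[(1 - r_m z) ∏_{i=1}^m (1 - (q_i + r_{i-1})z)] / [∏_{i=1}^m (1 - (q_i + r_i)z)]
 = ∏_{i=1}^m [1 + p_i q_i z² / ((1 - r_{i-1}z)(1 - (q_i + r_i)z))]`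
(here the product index `i : Fin m` is 0-indexed, so `r_{i-1}` becomes
`rsum i` and `r_i` becomes `rsum (i+1)`). -/
theorem phi_product_identity (m : ℕ) (hm : 1 ≤ m) :
    ((1 - rsum (m := m) m * zvar) *
        ∏ i : Fin m, (1 - (qvar i + rsum (i : ℕ)) * zvar)) /
        (∏ i : Fin m, (1 - (qvar i + rsum ((i : ℕ) + 1)) * zvar)) =
      ∏ i : Fin m,
        (1 + pvar i * qvar i * zvar ^ 2 /
          ((1 - rsum (m := m) (i : ℕ) * zvar) *
            (1 - (qvar i + rsum ((i : ℕ) + 1)) * zvar))) :=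
  phi_product_identity_general m
end

section
/- Let \u03c6(z) be a formal power series with constant term 1 over a commutative ring containing \u211a, and let R(z) be determined by the Lagrange inversion setup: with w = w(z) the unique formal power series solution of w = z\u03c6(w), define R(z) by z/R(z) = w(z) (so R(z) = z/w(z)). Then for all k \u2265 2, the coefficient R_k = [z^{k-1}] (R(z)/z) satisfies R_k = -(1/(k-1)) [y^k] \u03c6(y)^{k-1}. -/
/-
The series `w` has compositional inverse `g = X / φ`, so `R ∘ g = 1 / φ`. Differentiating,
`(R' ∘ g) · g' = (1/φ)'`, and coefficients of `R'` are read off with the residue identity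
`[y^n] g^m g' φ^(n+1) = δ_{mn}` (for `m < n` the series is `y^m (φ^j - (y/j) (φ^j)')`
with `j = n - m`, whose `y^n` coefficient vanishes). This gives
`k R_k = [y^(k-1)] (1/φ)' φ^k = -[y^(k-1)] φ^(k-2) φ'`, and
`(k-1) [y^(k-1)] φ^(k-2) φ' = [y^(k-1)] (φ^(k-1))' = k [y^k] φ^(k-1)`.
-/

/-- Composition `f(g)` of formal power series (intended for `g` with zero
constant term, in which case `coeff n (g^j) = 0` for `j > n` and the sum below
is the full sum `∑_j (coeff j f) · coeff n (g^j)`). -/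
noncomputable def pscomp {A : Type*} [CommRing A] (f g : PowerSeries A) : PowerSeries A :=
  PowerSeries.mk fun n =>
    ∑ j ∈ Finset.range (n + 1), PowerSeries.coeff (R := A) j f * PowerSeries.coeff (R := A) n (g ^ j)

namespace PowerSeries

open Finset

variable {A : Type*} [CommRing A]

theorem coeff_pow_eq_zero_of_lt {g : A⟦X⟧} (hg : constantCoeff g = 0) {n m : ℕ}
    (h : n < m) : coeff n (g ^ m) = 0 :=
  coeff_of_lt_order n <|
    (Nat.cast_lt.mpr h).trans_le (le_order_pow_of_constantCoeff_eq_zero m hg)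

theorem coeff_subst_eq_sum_range {g : A⟦X⟧} (hg : constantCoeff g = 0) (f : A⟦X⟧)
    {n N : ℕ} (hN : n < N) :
    coeff n (f.subst g) = ∑ m ∈ range N, coeff m f * coeff n (g ^ m) := by
  rw [coeff_subst' (HasSubst.of_constantCoeff_zero' hg)]
  refine finsum_eq_sum_of_support_subset _ fun m hm => ?_
  by_contra hmN
  rw [coe_range, Set.mem_Iio, not_lt] at hmN
  exact hm (by simp only [smul_eq_mul, coeff_pow_eq_zero_of_lt hg (hN.trans_le hmN), mul_zero])

theorem pscomp_eq_subst {g : A⟦X⟧} (hg : constantCoeff g = 0) (f : A⟦X⟧) :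
    pscomp f g = f.subst g := by
  ext n
  rw [coeff_subst_eq_sum_range hg f n.lt_succ_self, pscomp, coeff_mk]

theorem coeff_subst_mul {g : A⟦X⟧} (hg : constantCoeff g = 0) (f B : A⟦X⟧) (n : ℕ) :
    coeff n (f.subst g * B) = ∑ m ∈ range (n + 1), coeff m f * coeff n (g ^ m * B) := by
  simp_rw [coeff_mul, mul_sum]
  rw [sum_comm]
  refine sum_congr rfl fun p hp => ?_
  rw [coeff_subst_eq_sum_range hg f
    (Nat.lt_succ_of_le (Finset.HasAntidiagonal.antidiagonal.fst_le hp)), sum_mul]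
  exact sum_congr rfl fun m _ => mul_assoc _ _ _

theorem subst_eq_X_of_subst_eq_X {w g : A⟦X⟧} (hw0 : constantCoeff w = 0)
    (hw1 : IsUnit (coeff 1 w)) (h : g.subst w = X) :
    w.subst g = X := by
  have hw := HasSubst.of_constantCoeff_zero' hw0
  have hv := HasSubst.substInvOfIsUnit w hw1
  have hgv : g = w.substInvOfIsUnit hw1 :=
    calc g = g.subst (w.subst (w.substInvOfIsUnit hw1)) := by
          rw [subst_substInvOfIsUnit_right w hw0 hw1, X_subst]
      _ = w.substInvOfIsUnit hw1 := by rw [← subst_comp_subst_apply hw hv, h, subst_X hv]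
  rw [hgv, subst_substInvOfIsUnit_right w hw0 hw1]

theorem subst_X_mul_eq_of_mul_eq_X {φ ψ w R : A⟦X⟧} (hφψ : φ * ψ = 1)
    (hw0 : constantCoeff w = 0) (hw : w = X * φ.subst w) (hR : R * w = X) :
    R.subst (X * ψ) = ψ := by
  have hw' := HasSubst.of_constantCoeff_zero' hw0
  have hRS : R * φ.subst w = 1 := X_mul_cancel (by rw [mul_one, mul_left_comm, ← hw, hR])
  have hRψ : R = ψ.subst w :=
    calc R = R * (φ * ψ).subst w := by rw [hφψ, ← coe_substAlgHom hw', map_one, mul_one]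
      _ = ψ.subst w := by rw [subst_mul hw', ← mul_assoc, hRS, one_mul]
  have hwg : w.subst (X * ψ) = X := by
    refine subst_eq_X_of_subst_eq_X hw0 ?_ ?_
    · rw [hw, coeff_succ_X_mul, coeff_zero_eq_constantCoeff_apply]
      exact (IsUnit.of_mul_eq_one_right _ hRS).map constantCoeff
    · rw [subst_mul hw', subst_X hw', ← hRψ, mul_comm, hR]
  rw [hRψ, subst_comp_subst_apply hw' (HasSubst.of_constantCoeff_zero' (by simp)), hwg, X_subst]

theorem derivative_eq_neg_sq_mul_of_mul_eq_one {φ ψ : A⟦X⟧} (h : φ * ψ = 1) :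
    d⁄dX A ψ = -ψ ^ 2 * d⁄dX A φ :=
  derivative_inv ⟨φ, ψ, h, by rw [mul_comm, h]⟩

theorem succ_nsmul_coeff_pow_mul_derivative (φ : A⟦X⟧) (m n : ℕ) :
    (m + 1) • coeff n (φ ^ m * d⁄dX A φ) = (n + 1) • coeff (n + 1) (φ ^ (m + 1)) := by
  have h := coeff_derivative (φ ^ (m + 1)) n
  rw [derivative_pow, Nat.add_sub_cancel, mul_assoc, ← nsmul_eq_mul, map_nsmul] at h
  rw [h, nsmul_eq_mul, mul_comm]
  push_cast
  rfl

theorem coeff_pow_mul_derivative [Algebra ℚ A] (φ : A⟦X⟧) (n : ℕ) :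
    coeff n (φ ^ n * d⁄dX A φ) = coeff (n + 1) (φ ^ (n + 1)) :=
  smul_right_injective A (Nat.cast_add_one_ne_zero n : (n : ℚ) + 1 ≠ 0) <| by
    simpa only [← Nat.cast_smul_eq_nsmul ℚ, Nat.cast_succ] using
      succ_nsmul_coeff_pow_mul_derivative φ n n

theorem coeff_pow_mul_derivative_mul_pow [Algebra ℚ A] {φ ψ : A⟦X⟧} (h : φ * ψ = 1)
    (m j : ℕ) :
    coeff (m + j) ((X * ψ) ^ m * d⁄dX A (X * ψ) * φ ^ (m + j + 1)) =
      if j = 0 then 1 else 0 := by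
  have hDψ := derivative_eq_neg_sq_mul_of_mul_eq_one h
  have hD : d⁄dX A (X * ψ) = ψ - X * ψ ^ 2 * d⁄dX A φ := by
    rw [Derivation.leibniz, derivative_X, hDψ, smul_eq_mul, smul_eq_mul]
    ring
  have hsplit : (X * ψ) ^ m * d⁄dX A (X * ψ) * φ ^ (m + j + 1) =
      X ^ m * (φ ^ j * (1 - X * ψ * d⁄dX A φ)) :=
    calc (X * ψ) ^ m * d⁄dX A (X * ψ) * φ ^ (m + j + 1)
        = X ^ m * (φ * ψ) ^ m * φ ^ j * (φ * ψ - X * ψ * (φ * ψ) * d⁄dX A φ) := by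
          rw [hD]; ring
      _ = X ^ m * (φ ^ j * (1 - X * ψ * d⁄dX A φ)) := by rw [h]; ring
  rw [hsplit, add_comm, coeff_X_pow_mul]
  rcases j with _ | i
  · simp
  · have hexp : φ ^ (i + 1) * (1 - X * ψ * d⁄dX A φ) =
        φ ^ (i + 1) - X * (φ ^ i * d⁄dX A φ) := by
      linear_combination (-(X * φ ^ i * d⁄dX A φ)) * h
    rw [hexp, map_sub, coeff_succ_X_mul, coeff_pow_mul_derivative, sub_self,
      if_neg i.succ_ne_zero]

theorem coeff_subst_mul_derivative_mul_pow [Algebra ℚ A] {φ ψ : A⟦X⟧} (h : φ * ψ = 1)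
    (f : A⟦X⟧) (n : ℕ) :
    coeff n (f.subst (X * ψ) * d⁄dX A (X * ψ) * φ ^ (n + 1)) = coeff n f := by
  rw [mul_assoc, coeff_subst_mul (by simp) f, sum_eq_single_of_mem n (self_mem_range_succ n)]
  · have h0 := coeff_pow_mul_derivative_mul_pow h n 0
    rw [add_zero, if_pos rfl] at h0
    rw [← mul_assoc, h0, mul_one]
  · intro m hm hmn
    obtain ⟨j, rfl⟩ := Nat.exists_eq_add_of_le (Nat.lt_succ_iff.mp (mem_range.mp hm))
    rw [← mul_assoc, coeff_pow_mul_derivative_mul_pow h, if_neg (by omega), mul_zero]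

theorem coeff_derivative_eq_neg_of_subst_X_mul_eq [Algebra ℚ A] {φ ψ R : A⟦X⟧}
    (h : φ * ψ = 1) (hR : R.subst (X * ψ) = ψ) (n : ℕ) :
    coeff (n + 1) (d⁄dX A R) = -coeff (n + 1) (φ ^ n * d⁄dX A φ) :=
  calc coeff (n + 1) (d⁄dX A R) = coeff (n + 1) (d⁄dX A ψ * φ ^ (n + 2)) := by
        rw [← coeff_subst_mul_derivative_mul_pow h, ← derivative_subst
          (HasSubst.of_constantCoeff_zero' (by simp)), hR]
    _ = -coeff (n + 1) (φ ^ n * d⁄dX A φ) := by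
        rw [derivative_eq_neg_sq_mul_of_mul_eq_one h, ← map_neg]
        congr 1
        linear_combination (-(φ ^ n * d⁄dX A φ) * (φ * ψ + 1)) * h

end PowerSeries

open PowerSeries in
/-- **Lagrange inversion for the free cumulant series.**
Let `φ` be a power series with constant term `1`, `w` the solution of
`w = z φ(w)`, and `R` determined by `z / R(z) = w(z)`, i.e. `R·w = z`
(so `R_k = [z^{k-1}](R(z)/z) = [z^k] R(z)`). Then for `k ≥ 2`,
`R_k = -(1/(k-1)) [y^k] φ(y)^{k-1}`. -/
theorem lagrange_free_cumulant {A : Type*} [CommRing A] [Algebra ℚ A]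
    (φ w R : PowerSeries A)
    (hφ0 : PowerSeries.constantCoeff (R := A) φ = 1)
    (hw0 : PowerSeries.constantCoeff (R := A) w = 0)
    (hw : w = PowerSeries.X * pscomp φ w)
    (hR : R * w = PowerSeries.X)
    (k : ℕ) (hk : 2 ≤ k) :
    PowerSeries.coeff (R := A) k R =
      (-(1 / ((k : ℚ) - 1))) • PowerSeries.coeff (R := A) k (φ ^ (k - 1)) := by
  obtain ⟨n, rfl⟩ : ∃ n, k = n + 2 := ⟨k - 2, by omega⟩
  rw [pscomp_eq_subst hw0] at hw
  obtain ⟨ψ, hφψ⟩ : ∃ ψ, φ * ψ = 1 :=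
    ⟨invOfUnit φ 1, mul_invOfUnit φ 1 (by simp [hφ0])⟩
  have hψ := subst_X_mul_eq_of_mul_eq_X hφψ hw0 hw hR
  have hRk : ((n + 2 : ℕ) : ℚ) • coeff (n + 2) R = -coeff (n + 1) (φ ^ n * d⁄dX A φ) := by
    rw [← coeff_derivative_eq_neg_of_subst_X_mul_eq hφψ hψ, coeff_derivative,
      Nat.cast_smul_eq_nsmul, nsmul_eq_mul, mul_comm]
    push_cast
    ring
  have hpow : ((n + 1 : ℕ) : ℚ) • coeff (n + 1) (φ ^ n * d⁄dX A φ) =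
      ((n + 2 : ℕ) : ℚ) • coeff (n + 2) (φ ^ (n + 1)) := by
    simpa only [Nat.cast_smul_eq_nsmul] using succ_nsmul_coeff_pow_mul_derivative φ n (n + 1)
  rw [show n + 2 - 1 = n + 1 from rfl, show ((n + 2 : ℕ) : ℚ) - 1 = ((n + 1 : ℕ) : ℚ) by
    push_cast; ring, neg_smul, ← smul_neg, one_div, eq_inv_smul_iff₀ (by positivity)]
  refine smul_right_injective A (by positivity : ((n + 2 : ℕ) : ℚ) ≠ 0) ?_
  simp only [smul_comm _ (_ : ℚ) (coeff (n + 2) R), hRk, smul_neg, hpow]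
end
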